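/- arXiv:1705.02877 — 3 statements merged into one kernel-verified Lean document; each statement's English description precedes it below -/
import Mathlib

section
/- For every a ≥ 0 and every ε ∈ (0,1), there exists a unique b > 0 such that Q(a,b) = 1 − ε. (This is the value y = Q^{−1}(a, 1−ε) of the inverse Marcum Q-function with respect to its second argument.) -/
open Real MeasureTheory Filter

noncomputable def besselI0 (z : ℝ) : ℝ :=
  ∑' k : ℕ, (z / 2) ^ (2 * k) / ((Nat.factorial k : ℝ)) ^ 2

noncomputable def besselI1 (z : ℝ) : ℝ :=
  ∑' k : ℕ, (z / 2) ^ (2 * k + 1) / ((Nat.factorial k : ℝ) * (Nat.factorial (k + 1) : ℝ))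

noncomputable def marcumQ (a b : ℝ) : ℝ :=
  ∫ t in Set.Ioi b, t * Real.exp (-(t ^ 2 + a ^ 2) / 2) * besselI0 (a * t)

noncomputable def gaussQ (c : ℝ) : ℝ :=
  ∫ t in Set.Ioi c, (1 / Real.sqrt (2 * Real.pi)) * Real.exp (-t ^ 2 / 2)

/-!
Expanding `I₀` termwise, the integrand `t e^{-(t²+a²)/2} I₀(at)` of `Q(a, ·)` is the Poisson(`a²/2`)
mixture of the densities `t^{2k+1} e^{-t²/2} / (2^k k!)` on `(0, ∞)`. Hence it is positive there
and has total mass `1`, so `b ↦ Q(a, b)` decreases strictly and continuously on `[0, ∞)` from `1`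
to `0` and takes every value in `(0, 1)` exactly once.
-/

open Set
open scoped Nat

theorem besselI0_term_nonneg (z : ℝ) (k : ℕ) : 0 ≤ (z / 2) ^ (2 * k) / (k ! : ℝ) ^ 2 :=
  div_nonneg ((even_two_mul k).pow_nonneg _) (by positivity)

theorem hasSum_besselI0 (z : ℝ) :
    HasSum (fun k : ℕ => (z / 2) ^ (2 * k) / (k ! : ℝ) ^ 2) (besselI0 z) := by
  refine Summable.hasSum (.of_nonneg_of_le (besselI0_term_nonneg z) (fun k => ?_)
    (summable_pow_div_factorial ((z / 2) ^ 2)))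
  rw [pow_mul]
  gcongr
  exact le_self_pow₀ (Nat.one_le_cast.2 k.factorial_pos) two_ne_zero

theorem one_le_besselI0 (z : ℝ) : 1 ≤ besselI0 z := by
  simpa using le_hasSum (hasSum_besselI0 z) 0 fun k _ => besselI0_term_nonneg z k

theorem integral_pow_mul_exp_neg_sq_div_two (k : ℕ) :
    ∫ t in Ioi (0 : ℝ), t ^ (2 * k + 1) * exp (-t ^ 2 / 2) = 2 ^ k * k ! := by
  have h := integral_rpow_mul_exp_neg_mul_rpow (p := 2) (q := (2 * k + 1 : ℕ)) (b := 1 / 2)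
    two_pos (neg_one_lt_zero.trans_le (2 * k + 1).cast_nonneg) (by norm_num)
  rw [show (((2 * k + 1 : ℕ) : ℝ) + 1) / 2 = k + 1 by push_cast; ring, Gamma_nat_eq_factorial,
    show -(((2 * k + 1 : ℕ) : ℝ) + 1) / 2 = -(k + 1 : ℕ) by push_cast; ring,
    rpow_neg (by norm_num), rpow_natCast] at h
  calc ∫ t in Ioi (0 : ℝ), t ^ (2 * k + 1) * exp (-t ^ 2 / 2)
      = ∫ t in Ioi (0 : ℝ), t ^ ((2 * k + 1 : ℕ) : ℝ) * exp (-(1 / 2) * t ^ (2 : ℝ)) := by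
        refine setIntegral_congr_fun measurableSet_Ioi fun t _ => ?_
        rw [rpow_natCast, rpow_two]
        ring_nf
    _ = 2 ^ k * k ! := by
        rw [h, pow_succ]
        field_simp
        rw [← mul_pow]
        norm_num

noncomputable def marcumDensity (a t : ℝ) : ℝ :=
  t * exp (-(t ^ 2 + a ^ 2) / 2) * besselI0 (a * t)

theorem marcumDensity_pos (a : ℝ) {t : ℝ} (ht : 0 < t) : 0 < marcumDensity a t :=
  mul_pos (by positivity) (one_pos.trans_le (one_le_besselI0 _))

theorem hasSum_marcumDensity (a t : ℝ) :
    HasSum (fun k : ℕ => exp (-a ^ 2 / 2) * ((a / 2) ^ (2 * k) / (k ! : ℝ) ^ 2)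
      * (t ^ (2 * k + 1) * exp (-t ^ 2 / 2))) (marcumDensity a t) := by
  refine ((hasSum_besselI0 (a * t)).mul_left (t * exp (-(t ^ 2 + a ^ 2) / 2))).congr_fun
    fun k => ?_
  rw [show -(t ^ 2 + a ^ 2) / 2 = -a ^ 2 / 2 + -t ^ 2 / 2 by ring, exp_add]
  ring

theorem integral_marcumDensity (a : ℝ) : ∫ t in Ioi 0, marcumDensity a t = 1 := by
  set F : ℕ → ℝ → ℝ := fun k t => exp (-a ^ 2 / 2) * ((a / 2) ^ (2 * k) / (k ! : ℝ) ^ 2)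
    * (t ^ (2 * k + 1) * exp (-t ^ 2 / 2))
  have hF_integral (k : ℕ) : ∫ t in Ioi 0, F k t = exp (-a ^ 2 / 2) * ((a ^ 2 / 2) ^ k / k !) := by
    rw [integral_const_mul, integral_pow_mul_exp_neg_sq_div_two, pow_mul,
      show (a / 2) ^ 2 = a ^ 2 / 2 / 2 by ring, div_pow]
    field_simp
  have hF_nonneg (k : ℕ) (t : ℝ) (ht : t ∈ Ioi 0) : 0 ≤ F k t :=
    mul_nonneg (mul_nonneg (exp_pos _).le (besselI0_term_nonneg a k))
      (mul_nonneg (pow_pos ht _).le (exp_pos _).le)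
  have hF_integrable (k : ℕ) : IntegrableOn (F k) (Ioi 0) :=
    (Integrable.of_integral_ne_zero
      (by rw [integral_pow_mul_exp_neg_sq_div_two]; positivity)).const_mul _
  have hexp : HasSum (fun k : ℕ => exp (-a ^ 2 / 2) * ((a ^ 2 / 2) ^ k / k !)) 1 := by
    have := (NormedSpace.expSeries_div_hasSum_exp (a ^ 2 / 2)).mul_left (exp (-a ^ 2 / 2))
    rwa [← exp_eq_exp_ℝ, ← exp_add, show -a ^ 2 / 2 + a ^ 2 / 2 = 0 by ring, exp_zero] at this
  have hnorm (k : ℕ) : ∫ t in Ioi 0, ‖F k t‖ = ∫ t in Ioi 0, F k t :=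
    setIntegral_congr_fun measurableSet_Ioi fun t ht => norm_of_nonneg (hF_nonneg k t ht)
  have hsum := hasSum_integral_of_summable_integral_norm hF_integrable
    (by simp only [hnorm, hF_integral]; exact hexp.summable)
  rw [show (fun t => ∑' k, F k t) = marcumDensity a from
    funext fun t => (hasSum_marcumDensity a t).tsum_eq] at hsum
  simp only [hF_integral] at hsum
  exact hsum.unique hexp

theorem integrableOn_marcumDensity (a : ℝ) : IntegrableOn (marcumDensity a) (Ioi 0) :=
  .of_integral_ne_zero (by rw [integral_marcumDensity]; exact one_ne_zero)

section TailIntegral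

variable {f : ℝ → ℝ} {a : ℝ}

theorem strictAntiOn_integral_Ioi (hf : IntegrableOn f (Ioi a)) (hpos : ∀ t, a < t → 0 < f t) :
    StrictAntiOn (fun b => ∫ t in Ioi b, f t) (Ici a) := by
  intro x (hx : a ≤ x) y _ hxy
  have hfx : IntegrableOn f (Ioi x) := hf.mono_set (Ioi_subset_Ioi hx)
  have hsub := intervalIntegral.integral_Ioi_sub_Ioi hfx hxy.le
  have hgap : 0 < ∫ t in x..y, f t :=
    intervalIntegral.intervalIntegral_pos_of_pos_on
      ((intervalIntegrable_iff_integrableOn_Ioc_of_le hxy.le).2 (hfx.mono_set Ioc_subset_Ioi_self))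
      (fun t ht => hpos t (hx.trans_lt ht.1)) hxy
  dsimp only
  linarith

theorem existsUnique_integral_Ioi_eq (hf : IntegrableOn f (Ioi a)) (hpos : ∀ t, a < t → 0 < f t)
    {y : ℝ} (hy : y ∈ Ioo 0 (∫ t in Ioi a, f t)) :
    ∃! b, a < b ∧ ∫ t in Ioi b, f t = y := by
  obtain ⟨B, hBy, haB⟩ :=
    (((tendsto_integral_Ioi_zero tendsto_id).eventually (eventually_lt_nhds hy.1)).and
      (eventually_ge_atTop a)).exists
  obtain ⟨b, hb, hby⟩ := intermediate_value_Ioc' haB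
    (hf.continuousOn_Ici_primitive_Ioi.mono Icc_subset_Ici_self) ⟨hBy.le, hy.2⟩
  refine ⟨b, ⟨hb.1, hby⟩, fun c hc => ?_⟩
  exact (strictAntiOn_integral_Ioi hf hpos).injOn hc.1.le hb.1.le (hc.2.trans hby.symm)

end TailIntegral

theorem inverse_marcumQ_exists_unique_general (a ε : ℝ) (hε : ε ∈ Set.Ioo (0:ℝ) 1) :
    ∃! b : ℝ, 0 < b ∧ marcumQ a b = 1 - ε :=
  existsUnique_integral_Ioi_eq (f := marcumDensity a) (integrableOn_marcumDensity a)
    (fun _ => marcumDensity_pos a)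
    (by rw [integral_marcumDensity]; constructor <;> linarith [hε.1, hε.2])

theorem inverse_marcumQ_exists_unique (a ε : ℝ) (ha : 0 ≤ a) (hε : ε ∈ Set.Ioo (0:ℝ) 1) :
    ∃! b : ℝ, 0 < b ∧ marcumQ a b = 1 - ε :=
  inverse_marcumQ_exists_unique_general a ε hε
end

section
/- For every fixed b ≥ 0 and every a > 0, the map x ↦ Q(x,b) is differentiable at a with derivative ∂Q(a,b)/∂a = b·exp(−(a²+b²)/2)·I_1(a·b). -/
open Real MeasureTheory Filter

/-! Differentiate under the integral sign. The integrand `t e^{-(t²+x²)/2} I₀(xt)` of `marcumQ x b`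
is the Rice density; its derivative in `x` is `t e^{-(t²+x²)/2} (t I₁(xt) - x I₀(xt))`, and the
bounds `|I₀(z)|, |I₁(z)| ≤ e^{|z|}` dominate it near `a` by `t (t + A) e^{At - t²/2}`. Since
`(z I₁(z))' = z I₀(z)`, that derivative is `-∂ₜ (e^{-(t²+a²)/2} t I₁(at))`, so its integral over
`(b, ∞)` is the boundary term at `b`. Both `I₀' = I₁` and `(z I₁)' = z I₀` are read off from the
expansions of `I₀`, `I₁` and `z I₁` as entire power series in `(z/2)²`. -/

open Set Topology
open scoped Nat

section PowerSeries

variable {𝕜 : Type*} [RCLike 𝕜] {c : ℕ → 𝕜}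

theorem summable_mul_pow (hc : ∀ r : ℝ, Summable fun n => ‖c n‖ * r ^ n) (w : 𝕜) :
    Summable fun n => c n * w ^ n :=
  (hc ‖w‖).of_norm_bounded fun n => by rw [norm_mul, norm_pow]

theorem hasDerivAt_tsum_mul_pow (hc : ∀ r : ℝ, Summable fun n => ‖c n‖ * r ^ n) (w : 𝕜) :
    HasDerivAt (fun x => ∑' n, c n * x ^ n) (∑' n, (n + 1) * c (n + 1) * w ^ n) w := by
  set R : ℝ := ‖w‖ + 1
  have hR : 1 ≤ R := le_add_of_nonneg_left (norm_nonneg w)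
  have hw : w ∈ Metric.ball (0 : 𝕜) R := by simp [R]
  -- `n R ^ (n - 1) ≤ (2 R) ^ n` gives a summable bound on the termwise derivatives
  have hbound : ∀ n (y : 𝕜), y ∈ Metric.ball 0 R →
      ‖c n * (n * y ^ (n - 1))‖ ≤ ‖c n‖ * (2 * R) ^ n := by
    intro n y hy
    rw [mem_ball_zero_iff] at hy
    rw [norm_mul, norm_mul, norm_pow, RCLike.norm_natCast, mul_pow]
    refine mul_le_mul_of_nonneg_left (mul_le_mul (mod_cast n.lt_two_pow_self.le)
      ((pow_le_pow_left₀ (norm_nonneg _) hy.le _).trans (pow_le_pow_right₀ hR (n.sub_le 1)))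
      (by positivity) (by positivity)) (norm_nonneg _)
  have H := hasDerivAt_tsum_of_isPreconnected (hc (2 * R)) Metric.isOpen_ball
    (convex_ball 0 R).isPreconnected (fun n y _ => (hasDerivAt_pow n y).const_mul (c n))
    hbound hw (summable_mul_pow hc w) hw
  rw [((hc (2 * R)).of_norm_bounded fun n => hbound n w hw).tsum_eq_zero_add] at H
  refine H.congr_deriv ?_
  simp only [Nat.cast_zero, zero_mul, mul_zero, zero_add, Nat.add_sub_cancel, Nat.cast_add,
    Nat.cast_one]
  exact tsum_congr fun n => by ring

theorem differentiable_tsum_mul_pow (hc : ∀ r : ℝ, Summable fun n => ‖c n‖ * r ^ n) :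
    Differentiable 𝕜 fun x => ∑' n, c n * x ^ n :=
  fun w => (hasDerivAt_tsum_mul_pow hc w).differentiableAt

end PowerSeries

theorem summable_norm_mul_pow_of_norm_le_inv_factorial {𝕜 : Type*} [NormedField 𝕜] {c : ℕ → 𝕜}
    (hc : ∀ n, ‖c n‖ ≤ (n ! : ℝ)⁻¹) (r : ℝ) : Summable fun n => ‖c n‖ * r ^ n :=
  (Real.summable_pow_div_factorial |r|).of_norm_bounded fun n => by
    rw [norm_mul, norm_norm, norm_pow, Real.norm_eq_abs, div_eq_inv_mul]
    exact mul_le_mul_of_nonneg_right (hc n) (by positivity)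

theorem abs_tsum_le_exp {f : ℕ → ℝ} {e : ℕ → ℕ} (he : Function.Injective e) {x : ℝ}
    (hx : 0 ≤ x) (hf : ∀ k, |f k| ≤ x ^ e k / (e k)!) : |∑' k, f k| ≤ exp x := by
  have hs := Real.summable_pow_div_factorial x
  have hse : Summable fun k => x ^ e k / (e k)! := hs.comp_injective he
  calc |∑' k, f k| ≤ ∑' k, x ^ e k / (e k)! :=
        (Real.norm_eq_abs _).symm.trans_le (tsum_of_norm_bounded hse.hasSum hf)
    _ ≤ ∑' n, x ^ n / n ! := tsum_comp_le_tsum_of_inj hs (fun n => by positivity) he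
    _ = exp x := by rw [Real.exp_eq_exp_ℝ, NormedSpace.exp_eq_tsum_div]

theorem Nat.factorial_add_le_two_pow_mul (k m : ℕ) : (k + m)! ≤ 2 ^ (k + m) * (k ! * m !) := by
  rw [← Nat.add_choose_mul_factorial_mul_factorial k m, mul_assoc]
  exact Nat.mul_le_mul_right _ (Nat.choose_le_two_pow _ _)

theorem abs_half_pow_div_factorial_mul_factorial_le (z : ℝ) (k m : ℕ) :
    |(z / 2) ^ (k + m) / (k ! * m ! : ℝ)| ≤ |z| ^ (k + m) / (k + m)! := by
  rw [abs_div, abs_pow, abs_div, abs_two, div_pow, div_div,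
    abs_of_pos (by positivity : (0 : ℝ) < k ! * m !)]
  exact div_le_div_of_nonneg_left (by positivity) (Nat.cast_pos.2 (k + m).factorial_pos)
    (mod_cast Nat.factorial_add_le_two_pow_mul k m)

theorem abs_besselI0_le (z : ℝ) : |besselI0 z| ≤ exp |z| :=
  abs_tsum_le_exp (e := fun k => 2 * k) (fun _ _ h => by simp only at h; omega) (abs_nonneg z)
    fun k => by
    simpa only [two_mul, sq] using abs_half_pow_div_factorial_mul_factorial_le z k k

theorem abs_besselI1_le (z : ℝ) : |besselI1 z| ≤ exp |z| :=
  abs_tsum_le_exp (e := fun k => 2 * k + 1) (fun _ _ h => by simp only at h; omega)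
    (abs_nonneg z) fun k => by
    simpa only [two_mul, add_assoc] using abs_half_pow_div_factorial_mul_factorial_le z k (k + 1)

theorem norm_inv_factorial_sq_le (n : ℕ) : ‖((n ! : ℝ) ^ 2)⁻¹‖ ≤ (n ! : ℝ)⁻¹ := by
  rw [Real.norm_eq_abs, abs_of_nonneg (by positivity)]
  exact inv_anti₀ (by positivity) (le_self_pow₀ (mod_cast n.factorial_pos) two_ne_zero)

theorem norm_inv_factorial_mul_factorial_succ_le (n : ℕ) :
    ‖((n ! * (n + 1)! : ℝ))⁻¹‖ ≤ (n ! : ℝ)⁻¹ := by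
  rw [Real.norm_eq_abs, abs_of_nonneg (by positivity)]
  exact inv_anti₀ (by positivity) (le_mul_of_one_le_right (by positivity)
    (mod_cast (n + 1).factorial_pos))

theorem norm_mul_inv_factorial_sq_le (n : ℕ) : ‖(n * ((n ! : ℝ) ^ 2)⁻¹)‖ ≤ (n ! : ℝ)⁻¹ := by
  rw [Real.norm_eq_abs, abs_of_nonneg (by positivity), sq, mul_inv, ← mul_assoc]
  refine mul_le_of_le_one_left (by positivity) ?_
  rw [← div_eq_mul_inv]
  exact div_le_one_of_le₀ (mod_cast n.self_le_factorial) (by positivity)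

theorem besselI0_eq_tsum (z : ℝ) :
    besselI0 z = ∑' n : ℕ, ((n ! : ℝ) ^ 2)⁻¹ * ((z / 2) ^ 2) ^ n :=
  tsum_congr fun n => by rw [← pow_mul, div_eq_inv_mul]

theorem besselI1_eq_tsum (z : ℝ) :
    besselI1 z = z / 2 * ∑' n : ℕ, ((n ! * (n + 1)! : ℝ))⁻¹ * ((z / 2) ^ 2) ^ n := by
  rw [besselI1, ← tsum_mul_left]
  exact tsum_congr fun n => by rw [pow_succ, pow_mul]; ring

theorem mul_besselI1_eq_tsum (z : ℝ) :
    z * besselI1 z = 2 * ∑' n : ℕ, (n * ((n ! : ℝ) ^ 2)⁻¹) * ((z / 2) ^ 2) ^ n := by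
  have hs := summable_mul_pow
    (summable_norm_mul_pow_of_norm_le_inv_factorial norm_mul_inv_factorial_sq_le) ((z / 2) ^ 2)
  rw [hs.tsum_eq_zero_add, besselI1, ← tsum_mul_left]
  simp only [CharP.cast_eq_zero, zero_mul, zero_add, ← tsum_mul_left]
  refine tsum_congr fun n => ?_
  rw [Nat.factorial_succ, ← pow_mul]
  push_cast
  field_simp
  ring

theorem hasDerivAt_div_two_sq (z : ℝ) : HasDerivAt (fun z : ℝ => (z / 2) ^ 2) (z / 2) z :=
  (((hasDerivAt_id' z).div_const 2).fun_pow 2).congr_deriv (by ring)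

theorem hasDerivAt_besselI0 (z : ℝ) : HasDerivAt besselI0 (besselI1 z) z := by
  have hJ := hasDerivAt_tsum_mul_pow
    (summable_norm_mul_pow_of_norm_le_inv_factorial norm_inv_factorial_sq_le) ((z / 2) ^ 2)
  rw [funext besselI0_eq_tsum]
  refine (hJ.comp z (hasDerivAt_div_two_sq z)).congr_deriv ?_
  rw [besselI1_eq_tsum, mul_comm]
  refine congrArg _ (tsum_congr fun n => ?_)
  rw [Nat.factorial_succ]
  push_cast
  field_simp

theorem hasDerivAt_mul_besselI1 (z : ℝ) :
    HasDerivAt (fun z => z * besselI1 z) (z * besselI0 z) z := by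
  have hM := hasDerivAt_tsum_mul_pow
    (summable_norm_mul_pow_of_norm_le_inv_factorial norm_mul_inv_factorial_sq_le) ((z / 2) ^ 2)
  rw [funext mul_besselI1_eq_tsum, besselI0_eq_tsum]
  refine ((hM.comp z (hasDerivAt_div_two_sq z)).const_mul 2).congr_deriv ?_
  have hcoeff : ∀ n : ℕ, ((n : ℝ) + 1) * (((n + 1 : ℕ) : ℝ) * (((n + 1)! : ℝ) ^ 2)⁻¹)
      = ((n ! : ℝ) ^ 2)⁻¹ := fun n => by
    rw [Nat.factorial_succ]; push_cast; field_simp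
  simp only [hcoeff]
  ring

theorem continuous_besselI0 : Continuous besselI0 :=
  continuous_iff_continuousAt.2 fun z => (hasDerivAt_besselI0 z).continuousAt

theorem continuous_besselI1 : Continuous besselI1 := by
  rw [funext besselI1_eq_tsum]
  have hL := differentiable_tsum_mul_pow
    (summable_norm_mul_pow_of_norm_le_inv_factorial norm_inv_factorial_mul_factorial_succ_le)
  exact (continuous_id.div_const 2).mul (hL.continuous.comp (by fun_prop))

theorem tendsto_pow_mul_exp_mul_sub_sq_div_two (n : ℕ) (c : ℝ) :
    Tendsto (fun t : ℝ => t ^ n * exp (c * t - t ^ 2 / 2)) atTop (𝓝 0) := by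
  refine squeeze_zero' ?_ ?_ (tendsto_pow_mul_exp_neg_atTop_nhds_zero n)
  · filter_upwards [eventually_ge_atTop 0] with t ht
    positivity
  · filter_upwards [eventually_ge_atTop 0, eventually_ge_atTop (2 * (c + 1))] with t ht htc
    gcongr
    nlinarith

theorem integrableOn_Ioi_pow_mul_exp_mul_sub_sq_div_two (n : ℕ) (c b : ℝ) :
    IntegrableOn (fun t : ℝ => t ^ n * exp (c * t - t ^ 2 / 2)) (Ioi b) := by
  refine integrable_of_isBigO_exp_neg one_pos (by fun_prop) ?_
  -- split off a factor `exp (-t)` from a Gaussian that still tends to zero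
  have h := ((tendsto_pow_mul_exp_mul_sub_sq_div_two n (c + 1)).isBigO_one ℝ).mul
    (Asymptotics.isBigO_refl (fun t : ℝ => exp (-1 * t)) atTop)
  refine (h.congr_left fun t => ?_).congr_right fun t => one_mul _
  rw [mul_assoc, ← exp_add]
  ring_nf

theorem abs_exp_neg_sq_add_sq_div_two_mul_le {x t A B y : ℝ} (ht : 0 ≤ t) (hx : |x| ≤ A)
    (hy : |y| ≤ B * exp |x * t|) :
    |exp (-(t ^ 2 + x ^ 2) / 2) * y| ≤ B * exp (A * t - t ^ 2 / 2) := by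
  have hB : 0 ≤ B := nonneg_of_mul_nonneg_left ((abs_nonneg y).trans hy) (exp_pos _)
  have hexp : exp (-(t ^ 2 + x ^ 2) / 2) * exp |x * t| ≤ exp (A * t - t ^ 2 / 2) := by
    rw [← exp_add, abs_mul, abs_of_nonneg ht]
    exact exp_le_exp.2 (by nlinarith [mul_le_mul_of_nonneg_right hx ht, sq_nonneg x])
  rw [abs_mul, abs_of_pos (exp_pos _)]
  calc exp (-(t ^ 2 + x ^ 2) / 2) * |y| ≤ exp (-(t ^ 2 + x ^ 2) / 2) * (B * exp |x * t|) :=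
        mul_le_mul_of_nonneg_left hy (exp_pos _).le
    _ = B * (exp (-(t ^ 2 + x ^ 2) / 2) * exp |x * t|) := by ring
    _ ≤ B * exp (A * t - t ^ 2 / 2) := mul_le_mul_of_nonneg_left hexp hB

theorem hasDerivAt_mul_besselI1_const_mul (a t : ℝ) :
    HasDerivAt (fun t => t * besselI1 (a * t)) (a * t * besselI0 (a * t)) t := by
  rcases eq_or_ne a 0 with rfl | ha
  · simpa [besselI1] using hasDerivAt_const t (0 : ℝ)
  have h : HasDerivAt (fun t => a⁻¹ * (a * t * besselI1 (a * t)))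
      (a⁻¹ * (a * t * besselI0 (a * t) * a)) t :=
    ((hasDerivAt_mul_besselI1 (a * t)).comp t (hasDerivAt_const_mul a)).const_mul a⁻¹
  have hfun : (fun t => t * besselI1 (a * t)) = fun t => a⁻¹ * (a * t * besselI1 (a * t)) := by
    ext s
    field_simp
  rw [hfun]
  exact h.congr_deriv (by field_simp)

noncomputable def riceDensity (a t : ℝ) : ℝ :=
  t * exp (-(t ^ 2 + a ^ 2) / 2) * besselI0 (a * t)

noncomputable def riceDensityParamDeriv (a t : ℝ) : ℝ :=
  t * exp (-(t ^ 2 + a ^ 2) / 2) * (t * besselI1 (a * t) - a * besselI0 (a * t))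

theorem continuous_riceDensity (a : ℝ) : Continuous (riceDensity a) := by
  unfold riceDensity
  have := continuous_besselI0
  fun_prop

theorem continuous_riceDensityParamDeriv (a : ℝ) : Continuous (riceDensityParamDeriv a) := by
  unfold riceDensityParamDeriv
  have := continuous_besselI0
  have := continuous_besselI1
  fun_prop

theorem hasDerivAt_riceDensity (x t : ℝ) :
    HasDerivAt (fun x => riceDensity x t) (riceDensityParamDeriv x t) x := by
  have hexp : HasDerivAt (fun x : ℝ => -(t ^ 2 + x ^ 2) / 2) (-x) x :=
    (((hasDerivAt_pow 2 x).const_add (t ^ 2)).neg.div_const 2).congr_deriv (by ring)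
  have hI0 := (hasDerivAt_besselI0 (x * t)).comp x (hasDerivAt_mul_const t)
  exact ((hexp.exp.const_mul t).mul hI0).congr_deriv
    (by simp only [riceDensityParamDeriv, Function.comp_apply]; ring)

theorem hasDerivAt_exp_mul_mul_besselI1 (a t : ℝ) :
    HasDerivAt (fun t => exp (-(t ^ 2 + a ^ 2) / 2) * (t * besselI1 (a * t)))
      (-riceDensityParamDeriv a t) t := by
  have hexp : HasDerivAt (fun t : ℝ => -(t ^ 2 + a ^ 2) / 2) (-t) t :=
    (((hasDerivAt_pow 2 t).add_const (a ^ 2)).neg.div_const 2).congr_deriv (by ring)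
  exact (hexp.exp.mul (hasDerivAt_mul_besselI1_const_mul a t)).congr_deriv
    (by unfold riceDensityParamDeriv; ring)

theorem abs_riceDensity_le {x t A : ℝ} (ht : 0 ≤ t) (hx : |x| ≤ A) :
    |riceDensity x t| ≤ t * exp (A * t - t ^ 2 / 2) := by
  have h : riceDensity x t = exp (-(t ^ 2 + x ^ 2) / 2) * (t * besselI0 (x * t)) := by
    unfold riceDensity; ring
  rw [h]
  refine abs_exp_neg_sq_add_sq_div_two_mul_le ht hx ?_
  rw [abs_mul, abs_of_nonneg ht]
  exact mul_le_mul_of_nonneg_left (abs_besselI0_le _) ht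

theorem abs_riceDensityParamDeriv_le {x t A : ℝ} (ht : 0 ≤ t) (hx : |x| ≤ A) :
    |riceDensityParamDeriv x t| ≤ t * (t + A) * exp (A * t - t ^ 2 / 2) := by
  have h : riceDensityParamDeriv x t = exp (-(t ^ 2 + x ^ 2) / 2) *
      (t * (t * besselI1 (x * t) - x * besselI0 (x * t))) := by
    unfold riceDensityParamDeriv; ring
  rw [h]
  refine abs_exp_neg_sq_add_sq_div_two_mul_le ht hx ?_
  have hA : 0 ≤ A := (abs_nonneg x).trans hx
  calc |t * (t * besselI1 (x * t) - x * besselI0 (x * t))|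
      = t * |t * besselI1 (x * t) - x * besselI0 (x * t)| := by rw [abs_mul, abs_of_nonneg ht]
    _ ≤ t * (|t * besselI1 (x * t)| + |x * besselI0 (x * t)|) :=
        mul_le_mul_of_nonneg_left (abs_sub _ _) ht
    _ = t * (t * |besselI1 (x * t)| + |x| * |besselI0 (x * t)|) := by
        rw [abs_mul, abs_mul, abs_of_nonneg ht]
    _ ≤ t * (t * exp |x * t| + A * exp |x * t|) := by
        gcongr
        · exact abs_besselI1_le _
        · exact abs_besselI0_le _
    _ = t * (t + A) * exp |x * t| := by ring

theorem integrableOn_Ioi_mul_add_mul_exp (A b : ℝ) :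
    IntegrableOn (fun t => t * (t + A) * exp (A * t - t ^ 2 / 2)) (Ioi b) :=
  ((integrableOn_Ioi_pow_mul_exp_mul_sub_sq_div_two 2 A b).add
    ((integrableOn_Ioi_pow_mul_exp_mul_sub_sq_div_two 1 A b).const_mul A)).congr_fun
    (fun t _ => by simp only [Pi.add_apply]; ring) measurableSet_Ioi

theorem integrableOn_riceDensity {b : ℝ} (hb : 0 ≤ b) (a : ℝ) :
    IntegrableOn (riceDensity a) (Ioi b) :=
  (integrableOn_Ioi_pow_mul_exp_mul_sub_sq_div_two 1 |a| b).mono'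
    (continuous_riceDensity a).aestronglyMeasurable
    (ae_restrict_of_forall_mem measurableSet_Ioi fun t ht => by
      simpa only [pow_one, Real.norm_eq_abs] using abs_riceDensity_le (hb.trans ht.le) le_rfl)

theorem integrableOn_riceDensityParamDeriv {b : ℝ} (hb : 0 ≤ b) (a : ℝ) :
    IntegrableOn (riceDensityParamDeriv a) (Ioi b) :=
  (integrableOn_Ioi_mul_add_mul_exp |a| b).mono'
    (continuous_riceDensityParamDeriv a).aestronglyMeasurable
    (ae_restrict_of_forall_mem measurableSet_Ioi fun _ ht =>
      abs_riceDensityParamDeriv_le (hb.trans ht.le) le_rfl)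

theorem integral_Ioi_riceDensityParamDeriv {b : ℝ} (hb : 0 ≤ b) (a : ℝ) :
    ∫ t in Ioi b, riceDensityParamDeriv a t =
      b * exp (-(a ^ 2 + b ^ 2) / 2) * besselI1 (a * b) := by
  have hlim : Tendsto (fun t => -(exp (-(t ^ 2 + a ^ 2) / 2) * (t * besselI1 (a * t)))) atTop
      (𝓝 0) := by
    refine squeeze_zero_norm' ?_ (tendsto_pow_mul_exp_mul_sub_sq_div_two 1 |a|)
    filter_upwards [eventually_ge_atTop 0] with t ht
    rw [norm_neg, Real.norm_eq_abs, pow_one]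
    refine abs_exp_neg_sq_add_sq_div_two_mul_le ht le_rfl ?_
    rw [abs_mul, abs_of_nonneg ht]
    exact mul_le_mul_of_nonneg_left (abs_besselI1_le _) ht
  rw [integral_Ioi_of_hasDerivAt_of_tendsto'
    (fun t _ => (hasDerivAt_exp_mul_mul_besselI1 a t).neg.congr_deriv (neg_neg _))
    (integrableOn_riceDensityParamDeriv hb a) hlim, Pi.neg_apply, add_comm (b ^ 2)]
  ring

theorem marcumQ_hasDerivAt_first_arg_general (a b : ℝ) (hb : 0 ≤ b) :
    HasDerivAt (fun x => marcumQ x b)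
      (b * Real.exp (-(a ^ 2 + b ^ 2) / 2) * besselI1 (a * b)) a := by
  have hbound : ∀ᵐ t ∂volume.restrict (Ioi b), ∀ x ∈ Metric.ball a 1,
      ‖riceDensityParamDeriv x t‖ ≤ t * (t + (|a| + 1)) * exp ((|a| + 1) * t - t ^ 2 / 2) :=
    ae_restrict_of_forall_mem measurableSet_Ioi fun t ht x hx => by
      have := abs_sub_abs_le_abs_sub x a
      rw [Metric.mem_ball, Real.dist_eq] at hx
      exact abs_riceDensityParamDeriv_le (hb.trans ht.le) (by linarith)
  have key := hasDerivAt_integral_of_dominated_loc_of_deriv_le (Metric.ball_mem_nhds a one_pos)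
    (Eventually.of_forall fun x => (continuous_riceDensity x).aestronglyMeasurable)
    (integrableOn_riceDensity hb a) (continuous_riceDensityParamDeriv a).aestronglyMeasurable
    hbound (integrableOn_Ioi_mul_add_mul_exp (|a| + 1) b)
    (ae_of_all _ fun t x _ => hasDerivAt_riceDensity x t)
  rw [← integral_Ioi_riceDensityParamDeriv hb a]
  exact key.2

theorem marcumQ_hasDerivAt_first_arg (a b : ℝ) (hb : 0 ≤ b) (ha : 0 < a) :
    HasDerivAt (fun x => marcumQ x b)
      (b * Real.exp (-(a ^ 2 + b ^ 2) / 2) * besselI1 (a * b)) a :=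
  marcumQ_hasDerivAt_first_arg_general a b hb
end

section
/- For every fixed b > 0, the map a ↦ Q(a,b) is strictly increasing on (0,∞). -/
open Real MeasureTheory Filter

/-!
Expanding `I₀` as a power series writes the Marcum integrand as a Poisson mixture: with
`x = a²/2`, `y = b²/2` and `w x k = e^{-x} x^k / k!`, the substitution `s = t²/2` turns
`∫_b^∞ t · w (t²/2) k dt` into the Poisson(`y`) probability of `{0, …, k}`, so
`Q(a, b) = P(N ≤ K)` for independent `K ~ Poisson(x)` and `N ~ Poisson(y)`. Summing by
parts, `Q(a, b) = ∑ⱼ w y j · P(K ≥ j)`, and every tail `P(K ≥ j)` increases with the mean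
`x`, strictly for `j ≥ 1` because `d/dx P(K ≤ n) = -w x n`. The term `j = 1` has weight
`w y 1 > 0` once `b > 0`.
-/

open Finset
open scoped Nat Topology

noncomputable def poissonWeight (x : ℝ) (k : ℕ) : ℝ := exp (-x) * x ^ k / k !

noncomputable def poissonCDF (x : ℝ) (n : ℕ) : ℝ := ∑ k ∈ range (n + 1), poissonWeight x k

noncomputable def poissonTail (x : ℝ) (j : ℕ) : ℝ := ∑' k, poissonWeight x (k + j)

theorem poissonWeight_nonneg {x : ℝ} (hx : 0 ≤ x) (k : ℕ) : 0 ≤ poissonWeight x k := by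
  unfold poissonWeight; positivity

theorem poissonWeight_pos {x : ℝ} (hx : 0 < x) (k : ℕ) : 0 < poissonWeight x k := by
  unfold poissonWeight; positivity

theorem poissonWeight_zero (x : ℝ) : poissonWeight x 0 = exp (-x) := by
  simp [poissonWeight]

theorem hasSum_poissonWeight (x : ℝ) : HasSum (poissonWeight x) 1 := by
  have h := (NormedSpace.expSeries_div_hasSum_exp x).mul_left (exp (-x))
  rw [← exp_eq_exp_ℝ, ← exp_add, neg_add_cancel, exp_zero] at h
  simp only [← mul_div_assoc] at h
  exact h

theorem summable_poissonWeight (x : ℝ) : Summable (poissonWeight x) :=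
  (hasSum_poissonWeight x).summable

theorem hasDerivAt_poissonWeight_succ (x : ℝ) (n : ℕ) :
    HasDerivAt (poissonWeight · (n + 1)) (poissonWeight x n - poissonWeight x (n + 1)) x := by
  refine (((hasDerivAt_neg x).exp.fun_mul (hasDerivAt_pow (n + 1) x)).div_const
    ((n + 1)! : ℝ)).congr_deriv ?_
  rw [poissonWeight, poissonWeight, Nat.factorial_succ, Nat.add_sub_cancel]
  push_cast
  field_simp
  ring

theorem tendsto_poissonWeight_atTop (k : ℕ) : Tendsto (poissonWeight · k) atTop (𝓝 0) := by
  simpa [poissonWeight, mul_comm] using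
    (tendsto_pow_mul_exp_neg_atTop_nhds_zero k).div_const (k ! : ℝ)

theorem poissonCDF_succ (x : ℝ) (n : ℕ) :
    poissonCDF x (n + 1) = poissonCDF x n + poissonWeight x (n + 1) :=
  sum_range_succ _ _

theorem hasDerivAt_poissonCDF (x : ℝ) (n : ℕ) :
    HasDerivAt (poissonCDF · n) (-poissonWeight x n) x := by
  induction n with
  | zero => simpa [poissonCDF, poissonWeight_zero] using (hasDerivAt_neg x).exp
  | succ n ih =>
    simp only [poissonCDF_succ]
    exact (ih.fun_add (hasDerivAt_poissonWeight_succ x n)).congr_deriv (by ring)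

theorem tendsto_poissonCDF_atTop (n : ℕ) : Tendsto (poissonCDF · n) atTop (𝓝 0) := by
  simpa [poissonCDF] using
    tendsto_finsetSum (range (n + 1)) fun k _ => tendsto_poissonWeight_atTop k

theorem strictAntiOn_poissonCDF (n : ℕ) : StrictAntiOn (poissonCDF · n) (Set.Ici 0) := by
  refine strictAntiOn_of_deriv_neg (convex_Ici 0)
    (fun x _ => (hasDerivAt_poissonCDF x n).continuousAt.continuousWithinAt) fun x hx => ?_
  rw [interior_Ici] at hx
  rw [(hasDerivAt_poissonCDF x n).deriv]
  exact neg_neg_of_pos (poissonWeight_pos hx n)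

theorem poissonTail_zero (x : ℝ) : poissonTail x 0 = 1 :=
  (hasSum_poissonWeight x).tsum_eq

theorem poissonTail_succ (x : ℝ) (n : ℕ) : poissonTail x (n + 1) = 1 - poissonCDF x n := by
  rw [← (hasSum_poissonWeight x).tsum_eq,
    ← (summable_poissonWeight x).sum_add_tsum_nat_add (n + 1), poissonTail, poissonCDF]
  ring

theorem poissonTail_nonneg {x : ℝ} (hx : 0 ≤ x) (j : ℕ) : 0 ≤ poissonTail x j :=
  tsum_nonneg fun _ => poissonWeight_nonneg hx _

theorem poissonCDF_nonneg {x : ℝ} (hx : 0 ≤ x) (n : ℕ) : 0 ≤ poissonCDF x n :=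
  sum_nonneg fun _ _ => poissonWeight_nonneg hx _

theorem poissonCDF_le_one {x : ℝ} (hx : 0 ≤ x) (n : ℕ) : poissonCDF x n ≤ 1 := by
  linarith [poissonTail_succ x n, poissonTail_nonneg hx (n + 1)]

theorem poissonTail_le_one {x : ℝ} (hx : 0 ≤ x) (j : ℕ) : poissonTail x j ≤ 1 := by
  cases j with
  | zero => rw [poissonTail_zero]
  | succ n => linarith [poissonTail_succ x n, poissonCDF_nonneg hx n]

theorem strictMonoOn_poissonTail_succ (n : ℕ) :
    StrictMonoOn (poissonTail · (n + 1)) (Set.Ici 0) := fun x hx y hy hxy => by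
  simp only [poissonTail_succ]
  linarith [strictAntiOn_poissonCDF n hx hy hxy]

theorem monotoneOn_poissonTail (j : ℕ) : MonotoneOn (poissonTail · j) (Set.Ici 0) := by
  cases j with
  | zero => simp only [poissonTail_zero]; exact monotoneOn_const
  | succ n => exact (strictMonoOn_poissonTail_succ n).monotoneOn

theorem strictMonoOn_tsum_poissonWeight_mul_poissonTail {y : ℝ} (hy : 0 < y) :
    StrictMonoOn (fun x => ∑' j, poissonWeight y j * poissonTail x j) (Set.Ici 0) := by
  intro x₁ hx₁ x₂ hx₂ hx
  refine Summable.tsum_lt_tsum_of_nonneg (i := 1)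
    (fun j => mul_nonneg (poissonWeight_nonneg hy.le j) (poissonTail_nonneg hx₁ j))
    (fun j => mul_le_mul_of_nonneg_left (monotoneOn_poissonTail j hx₁ hx₂ hx.le)
      (poissonWeight_nonneg hy.le j))
    (mul_lt_mul_of_pos_left (strictMonoOn_poissonTail_succ 0 hx₁ hx₂ hx)
      (poissonWeight_pos hy 1)) ?_
  exact (summable_poissonWeight y).of_nonneg_of_le
    (fun j => mul_nonneg (poissonWeight_nonneg hy.le j) (poissonTail_nonneg hx₂ j))
    (fun j => mul_le_of_le_one_right (poissonWeight_nonneg hy.le j) (poissonTail_le_one hx₂ j))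

theorem tsum_mul_sum_range_succ_eq_tsum_mul_tsum_nat_add {f g : ℕ → ℝ} (hf₀ : 0 ≤ f)
    (hg₀ : 0 ≤ g) (hf : Summable f) (hg : Summable g) :
    ∑' k, f k * ∑ j ∈ range (k + 1), g j = ∑' j, g j * ∑' k, f (k + j) := by
  set F : ℕ → ℕ → ℝ := fun j k => if j ≤ k then g j * f k else 0
  have hF : Summable (Function.uncurry F) := by
    have hgf (p : ℕ × ℕ) : 0 ≤ g p.1 * f p.2 := mul_nonneg (hg₀ p.1) (hf₀ p.2)
    refine (hg.mul_of_nonneg hf hg₀ hf₀).of_nonneg_of_le (fun p => ?_) (fun p => ?_) <;>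
      dsimp only [Function.uncurry, F] <;> split_ifs <;> simp [hgf p]
  have hcol : ∀ k, ∑' j, F j k = f k * ∑ j ∈ range (k + 1), g j := by
    intro k
    rw [tsum_eq_sum (s := range (k + 1))
      fun j hj => if_neg (by simpa [Nat.lt_succ_iff] using hj), mul_sum]
    exact sum_congr rfl fun j hj => by
      rw [if_pos (Nat.lt_succ_iff.1 (mem_range.1 hj)), mul_comm]
  have hrow : ∀ j, ∑' k, F j k = g j * ∑' k, f (k + j) := by
    intro j
    have hFj : Summable (F j) := hF.prod_factor j
    rw [← hFj.sum_add_tsum_nat_add j,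
      sum_eq_zero fun k hk => if_neg (by simpa using hk), zero_add, ← tsum_mul_left]
    exact tsum_congr fun k => if_pos (Nat.le_add_left j k)
  simp_rw [← hcol, ← hrow]
  exact hF.tsum_comm

theorem mul_exp_mul_besselI0_eq_tsum (a t : ℝ) :
    t * exp (-(t ^ 2 + a ^ 2) / 2) * besselI0 (a * t) =
      ∑' k, poissonWeight (a ^ 2 / 2) k * (t * poissonWeight (t ^ 2 / 2) k) := by
  rw [besselI0, ← tsum_mul_left]
  congr 1 with k
  have hexp : exp (-(t ^ 2 + a ^ 2) / 2) = exp (-(a ^ 2 / 2)) * exp (-(t ^ 2 / 2)) := by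
    rw [← exp_add]; ring_nf
  rw [hexp, poissonWeight, poissonWeight, pow_mul,
    show (a * t / 2) ^ 2 = a ^ 2 / 2 * (t ^ 2 / 2) by ring, mul_pow]
  field_simp

theorem hasDerivAt_neg_poissonCDF_sq_div_two (t : ℝ) (n : ℕ) :
    HasDerivAt (fun t => -poissonCDF (t ^ 2 / 2) n) (t * poissonWeight (t ^ 2 / 2) n) t := by
  refine ((hasDerivAt_poissonCDF (t ^ 2 / 2) n).comp t
    ((hasDerivAt_pow 2 t).div_const 2)).fun_neg.congr_deriv ?_
  push_cast
  ring

theorem tendsto_neg_poissonCDF_sq_div_two_atTop (n : ℕ) :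
    Tendsto (fun t : ℝ => -poissonCDF (t ^ 2 / 2) n) atTop (𝓝 0) := by
  have hsq : Tendsto (fun t : ℝ => t ^ 2 / 2) atTop atTop :=
    (tendsto_pow_atTop two_ne_zero).atTop_div_const two_pos
  simpa using ((tendsto_poissonCDF_atTop n).comp hsq).neg

theorem integrableOn_mul_poissonWeight_sq_div_two {b : ℝ} (hb : 0 ≤ b) (n : ℕ) :
    IntegrableOn (fun t => t * poissonWeight (t ^ 2 / 2) n) (Set.Ioi b) :=
  integrableOn_Ioi_deriv_of_nonneg' (fun t _ => hasDerivAt_neg_poissonCDF_sq_div_two t n)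
    (fun t ht => mul_nonneg (hb.trans ht.out.le) (poissonWeight_nonneg (by positivity) n))
    (tendsto_neg_poissonCDF_sq_div_two_atTop n)

theorem integral_Ioi_mul_poissonWeight_sq_div_two {b : ℝ} (hb : 0 ≤ b) (n : ℕ) :
    ∫ t in Set.Ioi b, t * poissonWeight (t ^ 2 / 2) n = poissonCDF (b ^ 2 / 2) n := by
  rw [integral_Ioi_of_hasDerivAt_of_nonneg' (fun t _ => hasDerivAt_neg_poissonCDF_sq_div_two t n)
    (fun t ht => mul_nonneg (hb.trans ht.out.le) (poissonWeight_nonneg (by positivity) n))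
    (tendsto_neg_poissonCDF_sq_div_two_atTop n)]
  ring

theorem marcumQ_eq_tsum_poissonWeight_mul_poissonCDF (a : ℝ) {b : ℝ} (hb : 0 ≤ b) :
    marcumQ a b = ∑' k, poissonWeight (a ^ 2 / 2) k * poissonCDF (b ^ 2 / 2) k := by
  set F : ℕ → ℝ → ℝ := fun k t =>
    poissonWeight (a ^ 2 / 2) k * (t * poissonWeight (t ^ 2 / 2) k)
  have hF : ∀ k, ∫ t in Set.Ioi b, F k t =
      poissonWeight (a ^ 2 / 2) k * poissonCDF (b ^ 2 / 2) k := fun k => by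
    rw [integral_const_mul, integral_Ioi_mul_poissonWeight_sq_div_two hb]
  have hF_int : ∀ k, IntegrableOn (F k) (Set.Ioi b) :=
    fun k => (integrableOn_mul_poissonWeight_sq_div_two hb k).const_mul _
  have hF_norm : ∀ k, ∫ t in Set.Ioi b, ‖F k t‖ = ∫ t in Set.Ioi b, F k t := fun k =>
    setIntegral_congr_fun measurableSet_Ioi fun t ht => norm_of_nonneg <|
      mul_nonneg (poissonWeight_nonneg (by positivity) k)
        (mul_nonneg (hb.trans ht.out.le) (poissonWeight_nonneg (by positivity) k))
  have hF_sum : Summable fun k => ∫ t in Set.Ioi b, ‖F k t‖ := by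
    simp_rw [hF_norm, hF]
    exact (summable_poissonWeight _).of_nonneg_of_le
      (fun k => mul_nonneg (poissonWeight_nonneg (by positivity) k)
        (poissonCDF_nonneg (by positivity) k))
      (fun k => mul_le_of_le_one_right (poissonWeight_nonneg (by positivity) k)
        (poissonCDF_le_one (by positivity) k))
  simp_rw [marcumQ, mul_exp_mul_besselI0_eq_tsum, ← hF]
  exact (integral_tsum_of_summable_integral_norm hF_int hF_sum).symm

theorem marcumQ_eq_tsum_poissonWeight_mul_poissonTail (a : ℝ) {b : ℝ} (hb : 0 ≤ b) :
    marcumQ a b = ∑' j, poissonWeight (b ^ 2 / 2) j * poissonTail (a ^ 2 / 2) j :=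
  (marcumQ_eq_tsum_poissonWeight_mul_poissonCDF a hb).trans <|
    tsum_mul_sum_range_succ_eq_tsum_mul_tsum_nat_add
      (fun k => poissonWeight_nonneg (by positivity) k)
      (fun j => poissonWeight_nonneg (by positivity) j)
      (summable_poissonWeight _) (summable_poissonWeight _)

theorem marcumQ_strictMono_first_arg (b : ℝ) (hb : 0 < b) :
    StrictMonoOn (fun a => marcumQ a b) (Set.Ioi 0) := by
  have hsq : StrictMonoOn (fun a : ℝ => a ^ 2 / 2) (Set.Ioi 0) := fun a ha a' _ h =>
    div_lt_div_of_pos_right (pow_lt_pow_left₀ h (le_of_lt ha) two_ne_zero) two_pos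
  have hmix := (strictMonoOn_tsum_poissonWeight_mul_poissonTail (y := b ^ 2 / 2)
    (by positivity)).comp hsq fun a _ => Set.mem_Ici.2 (by positivity)
  intro a ha a' ha' h
  show marcumQ a b < marcumQ a' b
  rw [marcumQ_eq_tsum_poissonWeight_mul_poissonTail a hb.le,
    marcumQ_eq_tsum_poissonWeight_mul_poissonTail a' hb.le]
  exact hmix ha ha' h
end
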